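/- Let Cay(G,S) be a connected quintic Cayley graph on a finite abelian group with S = {s, -s, s', -s', s₀}, s₀ an involution, o(s), o(s') > 2, admitting a perfect code D with a ∈ {-1,1} such that g + a·s + s' + s₀ ∈ D for all g ∈ D. Suppose h·s + l·s' = 0 where both h and l are odd, 0 ≤ h ≤ o(s), 0 ≤ l ≤ o(s'). Then the 2-adic valuation of o(s) and the 2-adic valuation of o(s') are both strictly greater than the 2-adic valuation of l - a·h. -/

import Mathlib

/-- The Cayley graph of an additive group `G` with connection set `S`. -/
def cayley (G : Type*) [AddGroup G] (S : Set G) : SimpleGraph G where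
  Adj x y := x ≠ y ∧ (y - x ∈ S ∨ x - y ∈ S)
  symm := by
    refine ⟨?_⟩
    rintro x y ⟨h1, h2⟩
    exact ⟨h1.symm, h2.symm⟩
  loopless := by
    refine ⟨?_⟩
    rintro x ⟨h1, -⟩
    exact h1 rfl

/-- A perfect code of a graph: every vertex is at distance at most one
from exactly one vertex of `D`. -/
def IsPerfectCode {V : Type*} (Γ : SimpleGraph V) (D : Set V) : Prop :=
  ∀ v : V, ∃! c : V, c ∈ D ∧ (v = c ∨ Γ.Adj v c)

/-- The generating relation of the graph `Γ_{m,l,h}`. -/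
def gammaRel (m l h : ℕ) (p q : ZMod m × ZMod l) : Prop :=
  (q.1 = p.1 + 1 ∧ q.2 = p.2) ∨
  (q.1 = p.1 ∧ p.2.val ≠ l - 1 ∧ q.2 = p.2 + 1) ∨
  (p.2.val = l - 1 ∧ q.1 = p.1 - (h : ZMod m) ∧ q.2 = 0)

/-- The graph `Γ_{m,l,h}` of Construction 2.1. -/
def Gamma (m l h : ℕ) : SimpleGraph (ZMod m × ZMod l) where
  Adj p q := p ≠ q ∧ (gammaRel m l h p q ∨ gammaRel m l h q p)
  symm := by
    refine ⟨?_⟩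
    rintro p q ⟨h1, h2⟩
    exact ⟨h1.symm, h2.symm⟩
  loopless := by
    refine ⟨?_⟩
    rintro p ⟨h1, -⟩
    exact h1 rfl

/-- `tau n m` is the minimal positive divisor `j` of `m` with `gcd (n, m/j) = 1`. -/
noncomputable def tau (n m : ℕ) : ℕ := sInf {j : ℕ | 0 < j ∧ j ∣ m ∧ Nat.gcd n (m / j) = 1}

/-- The graph `Γ'_{m,l,h}` of Construction 2.4. -/
def Gamma' (m l h : ℕ) : SimpleGraph (ZMod m × ZMod l) where
  Adj p q := p ≠ q ∧ (gammaRel m l h p q ∨ gammaRel m l h q p ∨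
    (q.1 = p.1 + ((m / 2 : ℕ) : ZMod m) ∧ q.2 = p.2) ∨
    (p.1 = q.1 + ((m / 2 : ℕ) : ZMod m) ∧ p.2 = q.2))
  symm := by
    refine ⟨?_⟩
    rintro p q ⟨h1, h2⟩
    exact ⟨h1.symm, by tauto⟩
  loopless := by
    refine ⟨?_⟩
    rintro p ⟨h1, -⟩
    exact h1 rfl

/-- The graph `Γ''_{m,l,h}` of Construction 2.7. -/
def Gamma'' (m l h : ℕ) : SimpleGraph (ZMod m × ZMod l) where
  Adj p q := p ≠ q ∧ (gammaRel m l h p q ∨ gammaRel m l h q p ∨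
    (q.1 = p.1 + (((m + h - Nat.lcm h m : ℤ) / 2 : ℤ) : ZMod m) ∧
      p.2 = q.2 + ((l / 2 : ℕ) : ZMod l)) ∨
    (p.1 = q.1 + (((m + h - Nat.lcm h m : ℤ) / 2 : ℤ) : ZMod m) ∧
      q.2 = p.2 + ((l / 2 : ℕ) : ZMod l)))
  symm := by
    refine ⟨?_⟩
    rintro p q ⟨h1, h2⟩
    exact ⟨h1.symm, by tauto⟩
  loopless := by
    refine ⟨?_⟩
    rintro p ⟨h1, -⟩
    exact h1 rfl

/-- `sigma2 n` is the 2-adic valuation of the natural number `n`. -/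
def sigma2 (n : ℕ) : ℕ := padicValNat 2 n

/-- `sigma2Z n` is the 2-adic valuation of the integer `n`. -/
def sigma2Z (n : ℤ) : ℕ := padicValInt 2 n

/-!
Put `u = a • s + s'`. Using `a ^ 2 = 1`, the relation `h • s + l • s' = 0` gives
`(a * l) • u = (l - a * h) • s` and `(-(a * h)) • u = (l - a * h) • s'`, with odd
coefficients on the left. If `2 ^ σ(o(s))` divided `l - a * h`, then the odd part `c` of
`o(s)` would kill `c • (l - a * h) • s`, so `u` would have odd order. That is impossible:
`D` is invariant under translation by `u + s₀`, and an odd multiple `o(u) • (u + s₀) = s₀`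
of it would translate a codeword to an adjacent one.
-/

lemma IsPerfectCode.not_adj {V : Type*} {Γ : SimpleGraph V} {D : Set V} (hD : IsPerfectCode Γ D)
    {c c' : V} (hc : c ∈ D) (hc' : c' ∈ D) : ¬Γ.Adj c c' := by
  intro hadj
  obtain ⟨y, -, hy⟩ := hD c
  exact hadj.ne ((hy c ⟨hc, Or.inl rfl⟩).trans (hy c' ⟨hc', Or.inr hadj⟩).symm)

lemma cayley_adj_add_self {G : Type*} [AddCommGroup G] {S : Set G} (x : G) {t : G} (ht : t ∈ S)
    (ht₀ : t ≠ 0) : (cayley G S).Adj x (x + t) :=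
  ⟨by simpa using ht₀, Or.inl (by rwa [add_sub_cancel_left])⟩

lemma add_nsmul_mem_of_forall_add_mem {G : Type*} [AddMonoid G] {D : Set G} {t : G}
    (hD : ∀ g ∈ D, g + t ∈ D) {g : G} (hg : g ∈ D) (n : ℕ) : g + n • t ∈ D := by
  induction n with
  | zero => simpa using hg
  | succ n ih => simpa [succ_nsmul, add_assoc] using hD _ ih

lemma IsPerfectCode.even_addOrderOf_of_forall_add_mem {G : Type*} [AddCommGroup G] {S : Set G}
    {D : Set G} (hD : IsPerfectCode (cayley G S) D) {s₀ : G} (hs₀ : s₀ ∈ S)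
    (h0 : addOrderOf s₀ = 2) {u : G} (hshift : ∀ g ∈ D, g + (u + s₀) ∈ D) :
    Even (addOrderOf u) := by
  by_contra hodd
  rw [Nat.not_even_iff_odd] at hodd
  obtain ⟨c, ⟨hc, -⟩, -⟩ := hD 0
  have hs₀_ne : s₀ ≠ 0 := by
    rintro rfl
    simp at h0
  have htrans : addOrderOf u • (u + s₀) = s₀ := by
    rw [nsmul_add, addOrderOf_nsmul_eq_zero, zero_add, ← mod_addOrderOf_nsmul, h0,
      Nat.odd_iff.mp hodd, one_nsmul]
  have hmem := add_nsmul_mem_of_forall_add_mem hshift hc (addOrderOf u)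
  rw [htrans] at hmem
  exact hD.not_adj hc hmem (cayley_adj_add_self c hs₀ hs₀_ne)

lemma odd_addOrderOf_of_zsmul_eq {G : Type*} [AddCommGroup G] {x u : G} {w n : ℤ}
    (hx : 0 < addOrderOf x) (hw : Odd w) (hwu : w • u = n • x)
    (hn : 2 ^ padicValNat 2 (addOrderOf x) ∣ n) : Odd (addOrderOf u) := by
  obtain ⟨e, c, hc, hxc⟩ := Nat.exists_eq_two_pow_mul_odd hx.ne'
  have he : padicValNat 2 (addOrderOf x) = e := by
    rw [hxc, padicValNat.mul (by positivity) hc.pos.ne', padicValNat.prime_pow,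
      padicValNat.eq_zero_of_not_dvd hc.not_two_dvd_nat, add_zero]
  have hkill : ((c : ℤ) * n) • x = 0 := by
    rw [← addOrderOf_dvd_iff_zsmul_eq_zero, hxc, Nat.cast_mul, mul_comm]
    exact mul_dvd_mul_left _ (by exact_mod_cast he ▸ hn)
  have hcw : ((c : ℤ) * w) • u = 0 := by rw [mul_smul, hwu, ← mul_smul, hkill]
  exact (Int.natAbs_odd.mpr ((Int.odd_coe_nat c).mpr hc |>.mul hw)).of_dvd_nat
    (Int.natCast_dvd.mp (addOrderOf_dvd_iff_zsmul_eq_zero.mpr hcw))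

lemma padicValInt_lt_padicValNat_addOrderOf {G : Type*} [AddCommGroup G] {x u : G} {w n : ℤ}
    (hx : 0 < addOrderOf x) (hw : Odd w) (hwu : w • u = n • x) (hu : Even (addOrderOf u)) :
    padicValInt 2 n < padicValNat 2 (addOrderOf x) := by
  have : Fact (Nat.Prime 2) := ⟨Nat.prime_two⟩
  by_contra! hle
  have hdvd : (2 : ℤ) ^ padicValNat 2 (addOrderOf x) ∣ n :=
    (padicValInt_dvd_iff _ n).mpr (Or.inr hle)
  exact Nat.not_odd_iff_even.mpr hu (odd_addOrderOf_of_zsmul_eq hx hw hwu hdvd)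

theorem stmt6_general (G : Type*) [AddCommGroup G] [Fintype G] (s s' s₀ : G)
    (h0 : addOrderOf s₀ = 2)
    (D : Set G)
    (hD : IsPerfectCode (cayley G ({s, -s, s', -s', s₀} : Set G)) D)
    (a : ℤ) (ha : a = 1 ∨ a = -1)
    (hshift : ∀ g ∈ D, g + a • s + s' + s₀ ∈ D)
    (h l : ℤ)
    (hrel : h • s + l • s' = 0)
    (hoh : Odd h) (hol : Odd l) :
    sigma2Z (l - a * h) < sigma2 (addOrderOf s) ∧
      sigma2Z (l - a * h) < sigma2 (addOrderOf s') := by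
  have ha_odd : Odd a := by rcases ha with rfl | rfl <;> decide
  have hu : Even (addOrderOf (a • s + s')) :=
    hD.even_addOrderOf_of_forall_add_mem (by simp) h0 fun g hg => by
      simpa only [add_assoc] using hshift g hg
  have hrel_s : (a * l) • (a • s + s') = (l - a * h) • s := by
    linear_combination (norm := skip) a • hrel
    rcases ha with rfl | rfl <;> module
  have hrel_s' : (-(a * h)) • (a • s + s') = (l - a * h) • s' := by
    rcases ha with rfl | rfl <;> linear_combination (norm := module) -hrel
  exact ⟨padicValInt_lt_padicValNat_addOrderOf (addOrderOf_pos s) (ha_odd.mul hol) hrel_s hu,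
    padicValInt_lt_padicValNat_addOrderOf (addOrderOf_pos s') (ha_odd.mul hoh).neg hrel_s' hu⟩

theorem stmt6 (G : Type*) [AddCommGroup G] [Fintype G] (s s' s₀ : G)
    (h5 : ({s, -s, s', -s', s₀} : Set G).ncard = 5)
    (h0 : addOrderOf s₀ = 2) (hs : 2 < addOrderOf s) (hs' : 2 < addOrderOf s')
    (hgen : AddSubgroup.closure ({s, -s, s', -s', s₀} : Set G) = ⊤)
    (D : Set G)
    (hD : IsPerfectCode (cayley G ({s, -s, s', -s', s₀} : Set G)) D)
    (a : ℤ) (ha : a = 1 ∨ a = -1)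
    (hshift : ∀ g ∈ D, g + a • s + s' + s₀ ∈ D)
    (h l : ℤ) (hh0 : 0 ≤ h) (hhm : h ≤ (addOrderOf s : ℤ))
    (hl0 : 0 ≤ l) (hlm : l ≤ (addOrderOf s' : ℤ))
    (hrel : h • s + l • s' = 0)
    (hoh : Odd h) (hol : Odd l) :
    sigma2Z (l - a * h) < sigma2 (addOrderOf s) ∧
      sigma2Z (l - a * h) < sigma2 (addOrderOf s') :=
  stmt6_general G s s' s₀ h0 D hD a ha hshift h l hrel hoh hol
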